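/- For every integer n ≥ 4 and all real parameters γ, β: f_n(γ,β) = (1/2)·sin(4β)·sin(γ)·cos(γ)^{2n−2} − (1/4)·sin(2β)²·(1 − cos(2γ)^{2n−2}) < 1/(4n−1). -/
import Mathlib


open Real

/-- `N·u^N·(1-u) ≤ 1 - u^N` for `u ∈ [0,1]`. -/
lemma qaoa_aux_lemB (u : ℝ) (h0 : 0 ≤ u) (h1 : u ≤ 1) :
    ∀ N : ℕ, (N : ℝ) * u ^ N * (1 - u) ≤ 1 - u ^ N := by
  intro N
  induction N with
  | zero => simp
  | succ N ih =>
    have hw0 : 0 ≤ u ^ N := pow_nonneg h0 N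
    have hw1 : u ^ N ≤ 1 := pow_le_one₀ h0 h1
    have h2 : u * ((N : ℝ) * u ^ N * (1 - u)) ≤ u * (1 - u ^ N) :=
      mul_le_mul_of_nonneg_left ih h0
    have h3 : 0 ≤ (1 - u) * (1 - u * u ^ N) := by
      have : u * u ^ N ≤ 1 := by nlinarith
      apply mul_nonneg (by linarith) (by linarith)
    rw [pow_succ]
    push_cast
    nlinarith [h2, h3]

/-- Polynomial `sinh` inequality: `2N·u^N·(1-u) ≤ 1 - u^(2N)` for `u ∈ [0,1]`. -/
lemma qaoa_aux_lemA (u : ℝ) (h0 : 0 ≤ u) (h1 : u ≤ 1) :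
    ∀ N : ℕ, 2 * (N : ℝ) * u ^ N * (1 - u) ≤ 1 - u ^ (2 * N) := by
  intro N
  induction N with
  | zero => simp
  | succ N ih =>
    have hw0 : 0 ≤ u ^ N := pow_nonneg h0 N
    have hB1 := qaoa_aux_lemB u h0 h1 (N + 1)
    have hB0 := qaoa_aux_lemB u h0 h1 N
    have hP1 : u ^ 2 * (2 * (N : ℝ) * u ^ N * (1 - u)) ≤ u ^ 2 * (1 - u ^ (2 * N)) :=
      mul_le_mul_of_nonneg_left ih (sq_nonneg u)
    have hP2 : (1 - u) * ((N + 1 : ℝ) * u ^ (N + 1) * (1 - u)) ≤ (1 - u) * (1 - u ^ (N + 1)) := by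
      apply mul_le_mul_of_nonneg_left _ (by linarith)
      exact_mod_cast hB1
    have hP3 : (u * (1 - u)) * ((N : ℝ) * u ^ N * (1 - u)) ≤ (u * (1 - u)) * (1 - u ^ N) :=
      mul_le_mul_of_nonneg_left hB0 (mul_nonneg h0 (by linarith))
    have hP4 : 0 ≤ u ^ (N + 1) * (1 - u) ^ 2 :=
      mul_nonneg (pow_nonneg h0 _) (sq_nonneg _)
    have e1 : u ^ (2 * (N + 1)) = u ^ (2 * N) * u ^ 2 := by rw [← pow_add]; ring_nf
    have e2 : u ^ (N + 1) = u * u ^ N := by rw [pow_succ]; ring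
    rw [e1]
    rw [e2] at hP2 hP4 ⊢
    have e3 : u ^ (2 * N) = (u ^ N) ^ 2 := by rw [← pow_mul]; ring_nf
    rw [e3] at hP1 ⊢
    push_cast
    nlinarith [hP1, hP2, hP3, hP4]

lemma qaoa_aux_twoPow : ∀ N : ℕ, 6 ≤ N → (2 * N + 3) ^ 2 < 2 ^ (N + 2) := by
  intro N hN
  induction N, hN using Nat.le_induction with
  | base => norm_num
  | succ N hN ih =>
    have h1 : (2 * (N + 1) + 3) ^ 2 ≤ 2 * (2 * N + 3) ^ 2 := by nlinarith
    calc (2 * (N + 1) + 3) ^ 2 ≤ 2 * (2 * N + 3) ^ 2 := h1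
      _ < 2 * 2 ^ (N + 2) := by omega
      _ = 2 ^ (N + 1 + 2) := by ring

/-- The key polynomial inequality: for `N ≥ 6` and `u ∈ [0,1]`,
`(2N+3)²·(1-u)·u^N < 4 + (2N+3)·(1-(2u-1)^N)`. -/
lemma qaoa_aux_keyIneq (N : ℕ) (hN : 6 ≤ N) (u : ℝ) (h0 : 0 ≤ u) (h1 : u ≤ 1) :
    (2 * (N : ℝ) + 3) ^ 2 * ((1 - u) * u ^ N) <
      4 + (2 * (N : ℝ) + 3) * (1 - (2 * u - 1) ^ N) := by
  have hNR : (6 : ℝ) ≤ (N : ℝ) := by exact_mod_cast hN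
  have hv1 : (2 * u - 1) ^ N ≤ 1 := by
    calc (2 * u - 1) ^ N ≤ |2 * u - 1| ^ N := by
          rw [← abs_pow]; exact le_abs_self _
      _ ≤ 1 := pow_le_one₀ (abs_nonneg _) (abs_le.mpr ⟨by linarith, by linarith⟩)
  rcases le_or_gt (1 / 2 : ℝ) u with hu | hu
  · -- case u ≥ 1/2
    have hvu : (2 * u - 1) ^ N ≤ u ^ (2 * N) := by
      have h2 : (0 : ℝ) ≤ 2 * u - 1 := by linarith
      have h3 : 2 * u - 1 ≤ u ^ 2 := by nlinarith [sq_nonneg (1 - u)]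
      calc (2 * u - 1) ^ N ≤ (u ^ 2) ^ N := pow_le_pow_left₀ h2 h3 N
        _ = u ^ (2 * N) := (pow_mul u 2 N).symm
    have hA := qaoa_aux_lemA u h0 h1 N
    have hD0 : 0 ≤ (1 - u) * u ^ N := mul_nonneg (by linarith) (pow_nonneg h0 N)
    have hu2N : 0 ≤ u ^ (2 * N) := pow_nonneg h0 _
    rcases eq_or_lt_of_le hD0 with hD | hD
    · rw [← hD]
      have h5 : 0 ≤ (2 * (N : ℝ) + 3) * (1 - (2 * u - 1) ^ N) :=
        mul_nonneg (by linarith) (by linarith)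
      linarith
    · have hF1 : (2 * (N : ℝ) + 3) * (2 * (N : ℝ) * u ^ N * (1 - u)) ≤
          (2 * (N : ℝ) + 3) * (1 - u ^ (2 * N)) :=
        mul_le_mul_of_nonneg_left hA (by linarith)
      have hF4 : (2 * (N : ℝ) + 3) * (1 - u ^ (2 * N)) ≤
          (2 * (N : ℝ) + 3) * (1 - (2 * u - 1) ^ N) :=
        mul_le_mul_of_nonneg_left (by linarith) (by linarith)
      have hF2 : 0 < (2 * (N : ℝ) - 9) * ((1 - u) * u ^ N) :=
        mul_pos (by linarith) hD
      have hF3 : 2 * (N : ℝ) * u ^ N * (1 - u) ≤ 1 := by linarith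
      nlinarith [hF1, hF2, hF3, hF4]
  · -- case u < 1/2
    have htp : ((2 * N + 3 : ℕ) : ℝ) ^ 2 < (2 : ℝ) ^ (N + 2) := by
      exact_mod_cast qaoa_aux_twoPow N hN
    have htp' : (2 * (N : ℝ) + 3) ^ 2 < (2 : ℝ) ^ (N + 2) := by push_cast at htp; linarith
    have hun : u ^ N ≤ (1 / 2) ^ N := pow_le_pow_left₀ h0 hu.le N
    have h2N : (2 : ℝ) ^ (N + 2) * (1 / 2) ^ N = 4 := by
      rw [one_div, inv_pow, pow_add]
      field_simp; norm_num
    have hq : (2 * (N : ℝ) + 3) ^ 2 * u ^ N < 4 := by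
      have e1 : (2 * (N : ℝ) + 3) ^ 2 * u ^ N ≤ (2 * (N : ℝ) + 3) ^ 2 * (1 / 2) ^ N :=
        mul_le_mul_of_nonneg_left hun (by positivity)
      have e2 : (2 * (N : ℝ) + 3) ^ 2 * (1 / 2) ^ N < (2 : ℝ) ^ (N + 2) * (1 / 2) ^ N :=
        mul_lt_mul_of_pos_right htp' (by positivity)
      linarith
    have h5 : 0 ≤ (2 * (N : ℝ) + 3) * (1 - (2 * u - 1) ^ N) :=
      mul_nonneg (by linarith) (by linarith)
    have h6 : 0 ≤ (2 * (N : ℝ) + 3) ^ 2 * (u * u ^ N) := by positivity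
    nlinarith [hq, h5, h6]

/-- The optimization over `β` (Cauchy–Schwarz step). -/
lemma qaoa_aux_betaStep (R x y S C : ℝ) (hR0 : 0 < R) (hkey : R ^ 2 * x ^ 2 < 4 + R * y)
    (hy0 : 0 ≤ y) (hSC : S ^ 2 + C ^ 2 = 1) :
    (S * x / 2 + C * y / 8 - y / 8) * R < 1 := by
  have hprod : R ^ 2 * (x ^ 2 / 4 + y ^ 2 / 64) * (S ^ 2 + C ^ 2)
      = R ^ 2 * (x ^ 2 / 4 + y ^ 2 / 64) := by rw [hSC]; ring
  have hb : (0 : ℝ) < 1 + R * y / 8 := by nlinarith [mul_nonneg hR0.le hy0]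
  have h1 : (R * (S * x / 2 + C * y / 8)) ^ 2 < (1 + R * y / 8) ^ 2 := by
    nlinarith [hkey, hprod, sq_nonneg (R * (C * x / 2 - S * y / 8))]
  have h2 : R * (S * x / 2 + C * y / 8) < 1 + R * y / 8 :=
    lt_of_pow_lt_pow_left₀ 2 hb.le h1
  nlinarith [h2, mul_nonneg hR0.le hy0]

/-- The deviation from `1/2` of the per-edge expectation value of the level-1 QAOA
for MAX-CUT on the complete graph `K_{2n}`. -/
noncomputable def qaoaF (n : ℕ) (γ β : ℝ) : ℝ :=
  (1 / 2) * sin (4 * β) * sin γ * cos γ ^ (2 * n - 2)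
    - (1 / 4) * sin (2 * β) ^ 2 * (1 - cos (2 * γ) ^ (2 * n - 2))

/-- For every integer `n ≥ 4` and all real `γ, β`: `f_n(γ,β) < 1/(4n-1)`. -/
theorem qaoaF_lt (n : ℕ) (hn : 4 ≤ n) (γ β : ℝ) :
    qaoaF n γ β < 1 / (4 * (n : ℝ) - 1) := by
  have hN6 : 6 ≤ 2 * n - 2 := by omega
  have hn' : (4 : ℝ) ≤ (n : ℝ) := by exact_mod_cast hn
  have hcast : ((2 * n - 2 : ℕ) : ℝ) = 2 * (n : ℝ) - 2 := by
    push_cast [Nat.cast_sub (by omega : 2 ≤ 2 * n)]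
    ring
  have hR0 : (0 : ℝ) < 4 * (n : ℝ) - 1 := by linarith
  have hu0 : (0 : ℝ) ≤ cos γ ^ 2 := sq_nonneg _
  have hu1 : cos γ ^ 2 ≤ 1 := cos_sq_le_one γ
  have hkey := qaoa_aux_keyIneq (2 * n - 2) hN6 (cos γ ^ 2) hu0 hu1
  rw [← cos_two_mul γ, hcast] at hkey
  have hxx : (sin γ * cos γ ^ (2 * n - 2)) ^ 2
      = (1 - cos γ ^ 2) * (cos γ ^ 2) ^ (2 * n - 2) := by
    have e : (cos γ ^ 2) ^ (2 * n - 2) = (cos γ ^ (2 * n - 2)) ^ 2 := by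
      rw [← pow_mul, ← pow_mul, mul_comm]
    rw [e, mul_pow]
    linear_combination (cos γ ^ (2 * n - 2)) ^ 2 * sin_sq_add_cos_sq γ
  have hkey' : (4 * (n : ℝ) - 1) ^ 2 * (sin γ * cos γ ^ (2 * n - 2)) ^ 2
      < 4 + (4 * (n : ℝ) - 1) * (1 - cos (2 * γ) ^ (2 * n - 2)) := by
    rw [hxx]
    calc (4 * (n : ℝ) - 1) ^ 2 * ((1 - cos γ ^ 2) * (cos γ ^ 2) ^ (2 * n - 2))
        = (2 * (2 * (n : ℝ) - 2) + 3) ^ 2 * ((1 - cos γ ^ 2) * (cos γ ^ 2) ^ (2 * n - 2)) := by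
          ring_nf
      _ < 4 + (2 * (2 * (n : ℝ) - 2) + 3) * (1 - cos (2 * γ) ^ (2 * n - 2)) := hkey
      _ = 4 + (4 * (n : ℝ) - 1) * (1 - cos (2 * γ) ^ (2 * n - 2)) := by ring_nf
  have hcc : cos (2 * γ) ^ (2 * n - 2) = (cos (2 * γ) ^ 2) ^ (n - 1) := by
    rw [← pow_mul]
    congr 1
    omega
  have hy0 : 0 ≤ 1 - cos (2 * γ) ^ (2 * n - 2) := by
    rw [hcc]
    have h1 := pow_le_one₀ (n := n - 1) (sq_nonneg (cos (2 * γ))) (cos_sq_le_one (2 * γ))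
    linarith
  have hSC : sin (4 * β) ^ 2 + cos (4 * β) ^ 2 = 1 := sin_sq_add_cos_sq (4 * β)
  have h4 : cos (4 * β) = 2 * cos (2 * β) ^ 2 - 1 := by
    rw [show (4 : ℝ) * β = 2 * (2 * β) by ring, cos_two_mul]
  have hs2 : sin (2 * β) ^ 2 = 1 / 2 - cos (4 * β) / 2 := by
    have h := sin_sq_add_cos_sq (2 * β)
    linarith
  have hmain := qaoa_aux_betaStep (4 * (n : ℝ) - 1) (sin γ * cos γ ^ (2 * n - 2))
      (1 - cos (2 * γ) ^ (2 * n - 2)) (sin (4 * β)) (cos (4 * β)) hR0 hkey' hy0 hSC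
  rw [lt_div_iff₀ hR0]
  unfold qaoaF
  rw [hs2]
  ring_nf
  ring_nf at hmain
  linarith [hmain]
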